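/- Let (G1, G2) be genomes on extremity set V and (G1', G2') be genomes on a disjoint extremity set V', with d = d_SCJ(G1,G2) and d' = d_SCJ(G1',G2'), and let N and N' be the numbers of most parsimonious SCJ scenarios from G1 to G2 and from G1' to G2' respectively. Then the number of most parsimonious SCJ scenarios from the disjoint union G1 ⊔ G1' to G2 ⊔ G2' (genomes on V ⊔ V') equals binom(d + d', d) · N · N'. -/

import Mathlib

/-!
An SCJ operation changes the adjacency set by exactly one element, so a scenario from `G1` to `G2`
needs at least `|G1 Δ G2|` operations, and that many suffice (all cuts first, then all joins).
Hence a most parsimonious scenario is the same thing as an ordering of `G1 Δ G2` along which every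
intermediate adjacency set is a matching. On `V ⊕ V'` every adjacency lies on one side and the
matching condition can be checked side by side, so the admissible orderings for the disjoint union
are exactly the shuffles of admissible orderings of the two sides; a shuffle is determined by the
`d` positions, among `d + d'`, of the steps acting on `V`.
-/

/-- A genome on an extremity type `V`: a finite set of adjacencies (unordered pairs of
distinct extremities) that are pairwise disjoint (a partial matching). -/
structure Genome (V : Type*) where
  adj : Finset (Sym2 V)
  not_isDiag : ∀ p ∈ adj, ¬ p.IsDiag
  disj : ∀ p ∈ adj, ∀ q ∈ adj, p ≠ q → ∀ x, x ∈ p → x ∉ q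

instance {V : Type*} : Inhabited (Genome V) :=
  ⟨⟨∅, by simp, by simp⟩⟩

variable {V : Type*} [DecidableEq V]

/-- The step from `G` to `G'` is a cut removing the adjacency `p`. -/
def CutsAdj (G G' : Genome V) (p : Sym2 V) : Prop :=
  p ∈ G.adj ∧ G'.adj = G.adj.erase p

/-- The step from `G` to `G'` is a join adding the adjacency `p`
(validity of `G'` forces `p` to be a pair of distinct, currently unmatched extremities). -/
def JoinsAdj (G G' : Genome V) (p : Sym2 V) : Prop :=
  p ∉ G.adj ∧ G'.adj = insert p G.adj

/-- A single SCJ operation. -/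
def SCJStep (G G' : Genome V) : Prop :=
  ∃ p, CutsAdj G G' p ∨ JoinsAdj G G' p

/-- An SCJ scenario from `G1` to `G2`: a finite sequence of genomes starting at `G1`,
ending at `G2`, consecutive ones differing by a single SCJ operation.  A scenario
represented by a list `L` has `L.length - 1` operations. -/
def IsScenario (G1 G2 : Genome V) (L : List (Genome V)) : Prop :=
  L.head? = some G1 ∧ L.getLast? = some G2 ∧ L.Chain' SCJStep

/-- The SCJ distance: the minimum number of operations in a scenario from `G1` to `G2`. -/
noncomputable def dSCJ (G1 G2 : Genome V) : ℕ :=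
  sInf {n | ∃ L, IsScenario G1 G2 L ∧ L.length = n + 1}

/-- A most parsimonious SCJ scenario. -/
def IsMPS (G1 G2 : Genome V) (L : List (Genome V)) : Prop :=
  IsScenario G1 G2 L ∧ L.length = dSCJ G1 G2 + 1

/-- The number of most parsimonious SCJ scenarios from `G1` to `G2`. -/
noncomputable def NumMPS (G1 G2 : Genome V) : ℕ :=
  {L | IsMPS G1 G2 L}.ncard

/-- The `i`-th step of the scenario `L` (steps indexed from `0`) cuts adjacency `p`. -/
def StepCut (L : List (Genome V)) (i : ℕ) (p : Sym2 V) : Prop :=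
  i + 1 < L.length ∧ CutsAdj (L.getD i default) (L.getD (i + 1) default) p

/-- The `i`-th step of the scenario `L` (steps indexed from `0`) joins adjacency `p`. -/
def StepJoin (L : List (Genome V)) (i : ℕ) (p : Sym2 V) : Prop :=
  i + 1 < L.length ∧ JoinsAdj (L.getD i default) (L.getD (i + 1) default) p

/-- `c` is an alternating (up-down) permutation:
`c 0 < c 1 > c 2 < c 3 > …` (i.e. in 1-based notation `c₁ < c₂ > c₃ < …`). -/
def IsAltPerm {n : ℕ} (c : Equiv.Perm (Fin n)) : Prop :=
  ∀ i : ℕ, ∀ h : i + 1 < n,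
    if i % 2 = 0 then c ⟨i, by omega⟩ < c ⟨i + 1, h⟩
    else c ⟨i + 1, h⟩ < c ⟨i, by omega⟩

/-- `A n`, the number of alternating permutations of size `n` (with `A 0 = 1`). -/
noncomputable def altPermCount (n : ℕ) : ℕ :=
  Nat.card {c : Equiv.Perm (Fin n) // IsAltPerm c}

namespace Finset

variable {α : Type*} [DecidableEq α] {s : Finset α} {p : α}

theorem symmDiff_singleton_of_mem (hp : p ∈ s) : symmDiff s {p} = s.erase p := by
  ext q; by_cases hq : q = p <;> simp [mem_symmDiff, hq, hp]

theorem symmDiff_singleton_of_notMem (hp : p ∉ s) : symmDiff s {p} = insert p s := by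
  ext q; by_cases hq : q = p <;> simp [mem_symmDiff, hq, hp]

theorem card_symmDiff_singleton_of_mem (hp : p ∈ s) : #(symmDiff s {p}) + 1 = #s := by
  rw [symmDiff_singleton_of_mem hp, card_erase_add_one hp]

theorem card_symmDiff_singleton_of_notMem (hp : p ∉ s) : #(symmDiff s {p}) = #s + 1 := by
  rw [symmDiff_singleton_of_notMem hp, card_insert_of_notMem hp]

end Finset

open Finset

def IsMatching (s : Finset (Sym2 V)) : Prop :=
  (∀ p ∈ s, ¬ p.IsDiag) ∧ ∀ p ∈ s, ∀ q ∈ s, p ≠ q → ∀ x, x ∈ p → x ∉ q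

omit [DecidableEq V] in
theorem IsMatching.mono {s t : Finset (Sym2 V)} (ht : IsMatching t) (hst : s ⊆ t) :
    IsMatching s :=
  ⟨fun p hp => ht.1 p (hst hp), fun p hp q hq => ht.2 p (hst hp) q (hst hq)⟩

attribute [ext] Genome

namespace Genome

omit [DecidableEq V] in
theorem isMatching (G : Genome V) : IsMatching G.adj := ⟨G.not_isDiag, G.disj⟩

open Classical in
/-- The genome with adjacency set `s`, or the junk value `default` if `s` is not a matching. -/
noncomputable def ofFinset (s : Finset (Sym2 V)) : Genome V :=
  if h : IsMatching s then ⟨s, h.1, h.2⟩ else default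

omit [DecidableEq V] in
theorem ofFinset_adj {s : Finset (Sym2 V)} (h : IsMatching s) : (ofFinset s).adj = s := by
  simp [ofFinset, h]

omit [DecidableEq V] in
@[simp] theorem ofFinset_eta (G : Genome V) : ofFinset G.adj = G :=
  Genome.ext (ofFinset_adj G.isMatching)

end Genome

theorem scjStep_iff {G G' : Genome V} : SCJStep G G' ↔ ∃ p, G'.adj = symmDiff G.adj {p} := by
  refine ⟨fun ⟨p, h⟩ => ⟨p, ?_⟩, fun ⟨p, h⟩ => ⟨p, ?_⟩⟩
  · rcases h with ⟨hp, h⟩ | ⟨hp, h⟩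
    · rw [h, symmDiff_singleton_of_mem hp]
    · rw [h, symmDiff_singleton_of_notMem hp]
  · by_cases hp : p ∈ G.adj
    · exact .inl ⟨hp, by rw [h, symmDiff_singleton_of_mem hp]⟩
    · exact .inr ⟨hp, by rw [h, symmDiff_singleton_of_notMem hp]⟩

theorem isScenario_singleton {G1 G2 G : Genome V} :
    IsScenario G1 G2 [G] ↔ G = G1 ∧ G = G2 := by
  refine ⟨fun ⟨h1, h2, _⟩ => by simp_all, ?_⟩
  rintro ⟨rfl, rfl⟩
  exact ⟨rfl, rfl, List.isChain_singleton _⟩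

theorem isScenario_cons_cons {G1 G2 G G' : Genome V} {L : List (Genome V)} :
    IsScenario G1 G2 (G :: G' :: L) ↔ G = G1 ∧ SCJStep G G' ∧ IsScenario G' G2 (G' :: L) := by
  refine ⟨fun ⟨h1, h2, h3⟩ => ?_, ?_⟩
  · exact ⟨by simpa using h1, (List.isChain_cons_cons.1 h3).1, rfl, h2,
      (List.isChain_cons_cons.1 h3).2⟩
  · rintro ⟨rfl, hstep, -, h2, h3⟩
    exact ⟨rfl, h2, List.isChain_cons_cons.2 ⟨hstep, h3⟩⟩

theorem IsScenario.card_symmDiff_lt_length {G2 : Genome V} :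
    ∀ {G1 : Genome V} {L : List (Genome V)}, IsScenario G1 G2 L →
      #(symmDiff G1.adj G2.adj) < L.length
  | _, [], h => by simp [IsScenario] at h
  | G1, [G], h => by
    obtain ⟨rfl, rfl⟩ := isScenario_singleton.1 h
    simp
  | _, G :: G' :: L, h => by
    obtain ⟨rfl, hstep, htail⟩ := isScenario_cons_cons.1 h
    obtain ⟨p, hp⟩ := scjStep_iff.1 hstep
    have hlt := htail.card_symmDiff_lt_length
    rw [hp, symmDiff_right_comm] at hlt
    simp only [List.length_cons] at hlt ⊢
    by_cases hmem : p ∈ symmDiff G.adj G2.adj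
    · have := card_symmDiff_singleton_of_mem hmem
      omega
    · have := card_symmDiff_singleton_of_notMem hmem
      omega

/-- `l` is the sequence of adjacencies toggled by a most parsimonious scenario from `s` to `t`. -/
def IsParsimoniousSeq : Finset (Sym2 V) → Finset (Sym2 V) → List (Sym2 V) → Prop
  | s, t, [] => IsMatching s ∧ s = t
  | s, t, p :: l => IsMatching s ∧ p ∈ symmDiff s t ∧ IsParsimoniousSeq (symmDiff s {p}) t l

theorem IsParsimoniousSeq.isMatching {s t : Finset (Sym2 V)} :
    ∀ {l : List (Sym2 V)}, IsParsimoniousSeq s t l → IsMatching s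
  | [], h => h.1
  | _ :: _, h => h.1

theorem IsParsimoniousSeq.length_eq {t : Finset (Sym2 V)} :
    ∀ {s : Finset (Sym2 V)} {l : List (Sym2 V)}, IsParsimoniousSeq s t l →
      l.length = #(symmDiff s t)
  | _, [], ⟨_, rfl⟩ => by simp
  | s, p :: l, ⟨_, hp, hl⟩ => by
    rw [List.length_cons, hl.length_eq, symmDiff_right_comm,
      card_symmDiff_singleton_of_mem hp]

theorem exists_toggle_isMatching {s t : Finset (Sym2 V)} (hs : IsMatching s)
    (ht : IsMatching t) (hst : s ≠ t) :
    ∃ p ∈ symmDiff s t, IsMatching (symmDiff s {p}) := by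
  by_cases hcut : ∃ p ∈ s, p ∉ t
  · obtain ⟨p, hps, hpt⟩ := hcut
    refine ⟨p, mem_symmDiff.2 (.inl ⟨hps, hpt⟩), ?_⟩
    rw [symmDiff_singleton_of_mem hps]
    exact hs.mono (erase_subset p s)
  · push Not at hcut
    obtain ⟨p, hpt, hps⟩ : ∃ p ∈ t, p ∉ s := by
      by_contra! h
      exact hst (Subset.antisymm hcut h)
    refine ⟨p, mem_symmDiff.2 (.inr ⟨hpt, hps⟩), ?_⟩
    rw [symmDiff_singleton_of_notMem hps]
    exact ht.mono (insert_subset hpt hcut)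

theorem exists_isParsimoniousSeq {s t : Finset (Sym2 V)} (hs : IsMatching s)
    (ht : IsMatching t) : ∃ l, IsParsimoniousSeq s t l := by
  induction hn : #(symmDiff s t) generalizing s with
  | zero => exact ⟨[], hs, symmDiff_eq_bot.1 (card_eq_zero.1 hn)⟩
  | succ n ih =>
    have hst : s ≠ t := by rintro rfl; simp at hn
    obtain ⟨p, hp, hps⟩ := exists_toggle_isMatching hs ht hst
    have hn' : #(symmDiff (symmDiff s {p}) t) = n := by
      have := card_symmDiff_singleton_of_mem hp
      rw [symmDiff_right_comm]; omega
    obtain ⟨l, hl⟩ := ih hps hn'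
    exact ⟨p :: l, hs, hp, hl⟩

noncomputable def toggleScenario (G : Genome V) : List (Sym2 V) → List (Genome V)
  | [] => [G]
  | p :: l => G :: toggleScenario (Genome.ofFinset (symmDiff G.adj {p})) l

@[simp] theorem length_toggleScenario (G : Genome V) (l : List (Sym2 V)) :
    (toggleScenario G l).length = l.length + 1 := by
  induction l generalizing G <;> simp [toggleScenario, *]

theorem head?_toggleScenario (G : Genome V) (l : List (Sym2 V)) :
    (toggleScenario G l).head? = some G := by
  cases l <;> rfl

theorem IsScenario.cons {G1 G G2 : Genome V} {L : List (Genome V)} (h : IsScenario G G2 L)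
    (hstep : SCJStep G1 G) : IsScenario G1 G2 (G1 :: L) := by
  obtain _ | ⟨G', L⟩ := L
  · simp [IsScenario] at h
  · obtain rfl : G' = G := by simpa using h.1
    exact isScenario_cons_cons.2 ⟨rfl, hstep, h⟩

theorem IsParsimoniousSeq.isScenario {G2 : Genome V} :
    ∀ {G1 : Genome V} {l : List (Sym2 V)}, IsParsimoniousSeq G1.adj G2.adj l →
      IsScenario G1 G2 (toggleScenario G1 l)
  | G1, [], ⟨_, h⟩ => isScenario_singleton.2 ⟨rfl, Genome.ext h⟩
  | G1, p :: l, ⟨_, _, hl⟩ => by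
    have hadj : (Genome.ofFinset (symmDiff G1.adj {p})).adj = symmDiff G1.adj {p} :=
      Genome.ofFinset_adj hl.isMatching
    rw [← hadj] at hl
    exact hl.isScenario.cons (scjStep_iff.2 ⟨p, hadj⟩)

theorem dSCJ_eq_card_symmDiff (G1 G2 : Genome V) : dSCJ G1 G2 = #(symmDiff G1.adj G2.adj) := by
  refine IsLeast.csInf_eq ⟨?_, ?_⟩
  · obtain ⟨l, hl⟩ := exists_isParsimoniousSeq G1.isMatching G2.isMatching
    exact ⟨_, hl.isScenario, by simp [hl.length_eq]⟩
  · rintro n ⟨L, hL, hlen⟩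
    have := hL.card_symmDiff_lt_length
    omega

theorem isMPS_iff {G1 G2 : Genome V} {L : List (Genome V)} :
    IsMPS G1 G2 L ↔ IsScenario G1 G2 L ∧ L.length = #(symmDiff G1.adj G2.adj) + 1 := by
  rw [IsMPS, dSCJ_eq_card_symmDiff]

theorem IsScenario.exists_toggleScenario_eq {G2 : Genome V} :
    ∀ {G1 : Genome V} {L : List (Genome V)}, IsScenario G1 G2 L →
      L.length = #(symmDiff G1.adj G2.adj) + 1 →
      ∃ l, IsParsimoniousSeq G1.adj G2.adj l ∧ toggleScenario G1 l = L
  | _, [], h, _ => by simp [IsScenario] at h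
  | G1, [G], h, _ => by
    obtain ⟨rfl, rfl⟩ := isScenario_singleton.1 h
    exact ⟨[], ⟨G.isMatching, rfl⟩, rfl⟩
  | G1, G :: G' :: L, h, hlen => by
    obtain ⟨rfl, hstep, htail⟩ := isScenario_cons_cons.1 h
    obtain ⟨p, hp⟩ := scjStep_iff.1 hstep
    have hlt := htail.card_symmDiff_lt_length
    rw [hp, symmDiff_right_comm] at hlt
    simp only [List.length_cons] at hlen hlt
    -- a step away from `G2` would leave too few steps to reach it
    have hmem : p ∈ symmDiff G.adj G2.adj := by
      by_contra hmem
      have := card_symmDiff_singleton_of_notMem hmem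
      omega
    have htail_len : (G' :: L).length = #(symmDiff G'.adj G2.adj) + 1 := by
      have := card_symmDiff_singleton_of_mem hmem
      rw [hp, symmDiff_right_comm, List.length_cons]
      omega
    obtain ⟨l, hl, hlL⟩ := htail.exists_toggleScenario_eq htail_len
    refine ⟨p :: l, ⟨G.isMatching, hmem, hp ▸ hl⟩, ?_⟩
    rw [toggleScenario, ← hp, Genome.ofFinset_eta, hlL]

theorem toggleScenario_injOn (G : Genome V) (t : Finset (Sym2 V)) :
    Set.InjOn (toggleScenario G) {l | IsParsimoniousSeq G.adj t l} := by
  intro l hl l' hl' heq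
  induction l generalizing G l' with
  | nil =>
    obtain _ | ⟨q, l'⟩ := l'
    · rfl
    · simpa using congrArg List.length heq
  | cons p l ih =>
    obtain _ | ⟨q, l'⟩ := l'
    · simpa using congrArg List.length heq
    simp only [toggleScenario, List.cons.injEq, true_and] at heq
    obtain ⟨-, -, hl⟩ := hl
    obtain ⟨-, -, hl'⟩ := hl'
    have hG := congrArg List.head? heq
    simp only [head?_toggleScenario, Option.some.injEq] at hG
    have hpq : p = q := by
      have := congrArg Genome.adj hG
      rw [Genome.ofFinset_adj hl.isMatching, Genome.ofFinset_adj hl'.isMatching] at this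
      exact singleton_injective (symmDiff_right_injective _ this)
    subst hpq
    have hadj := Genome.ofFinset_adj hl.isMatching
    rw [← hadj] at hl hl'
    rw [ih _ hl hl' heq]

theorem numMPS_eq_ncard (G1 G2 : Genome V) :
    NumMPS G1 G2 = {l | IsParsimoniousSeq G1.adj G2.adj l}.ncard := by
  have : {L | IsMPS G1 G2 L} = toggleScenario G1 '' {l | IsParsimoniousSeq G1.adj G2.adj l} := by
    refine Set.ext fun L => ⟨fun hL => ?_, ?_⟩
    · exact (isMPS_iff.1 hL).1.exists_toggleScenario_eq (isMPS_iff.1 hL).2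
    · rintro ⟨l, hl, rfl⟩
      exact isMPS_iff.2 ⟨hl.isScenario, by simp [hl.length_eq]⟩
  rw [NumMPS, this, (toggleScenario_injOn G1 G2.adj).ncard_image]

section Shuffle

variable {α β : Type*}

def shuffle : List Bool → List α → List β → List (α ⊕ β)
  | true :: bs, a :: l₁, l₂ => .inl a :: shuffle bs l₁ l₂
  | false :: bs, l₁, b :: l₂ => .inr b :: shuffle bs l₁ l₂
  | _, _, _ => []

theorem unshuffle_shuffle :
    ∀ {bs : List Bool} {l₁ : List α} {l₂ : List β},
      bs.count true = l₁.length → bs.count false = l₂.length →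
      ((shuffle bs l₁ l₂).map Sum.isLeft, (shuffle bs l₁ l₂).filterMap Sum.getLeft?,
        (shuffle bs l₁ l₂).filterMap Sum.getRight?) = (bs, l₁, l₂)
  | [], [], [], _, _ => rfl
  | true :: bs, a :: l₁, l₂, h₁, h₂ => by
    simpa [shuffle, List.filterMap_cons] using
      unshuffle_shuffle (by simpa using h₁) (by simpa using h₂)
  | false :: bs, l₁, b :: l₂, h₁, h₂ => by
    simpa [shuffle, List.filterMap_cons] using
      unshuffle_shuffle (by simpa using h₁) (by simpa using h₂)
  | [], _ :: _, _, h₁, _ | [], _, _ :: _, _, h₂ | true :: _, [], _, h₁, _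
  | false :: _, _, [], _, h₂ => by simp_all

theorem shuffle_injOn :
    Set.InjOn (fun x : List Bool × List α × List β => shuffle x.1 x.2.1 x.2.2)
      {x | x.1.count true = x.2.1.length ∧ x.1.count false = x.2.2.length} := by
  intro x hx y hy h
  have := congrArg (fun m => (m.map Sum.isLeft, m.filterMap Sum.getLeft?,
    m.filterMap Sum.getRight?)) h
  simpa only [unshuffle_shuffle hx.1 hx.2, unshuffle_shuffle hy.1 hy.2] using this

end Shuffle

theorem setOf_count_not_eq_zero (x : Bool) (n : ℕ) :
    {bs : List Bool | bs.count (!x) = 0 ∧ bs.count x = n} = {List.replicate n x} := by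
  ext bs
  simp only [Set.mem_ofPred_eq, Set.mem_singleton_iff, List.count_eq_zero]
  constructor
  · rintro ⟨h, rfl⟩
    have hx : ∀ y ∈ bs, y = x := fun y hy => by cases x <;> cases y <;> simp_all
    exact List.eq_replicate_iff.2 ⟨(List.count_eq_length.2 fun y hy => (hx y hy).symm).symm, hx⟩
  · rintro rfl
    simp

theorem ncard_setOf_count_true_count_false (a b : ℕ) :
    {bs : List Bool | bs.count true = a ∧ bs.count false = b}.ncard = (a + b).choose a := by
  have hfin (a b : ℕ) : {bs : List Bool | bs.count true = a ∧ bs.count false = b}.Finite :=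
    (List.finite_length_eq Bool (a + b)).subset fun bs ⟨ha, hb⟩ => by
      simp [← ha, ← hb, List.count_true_add_count_false]
  induction a generalizing b with
  | zero =>
    rw [Nat.choose_zero_right, Set.ncard_eq_one]
    exact ⟨_, setOf_count_not_eq_zero false b⟩
  | succ a iha =>
    induction b with
    | zero =>
      rw [Nat.add_zero, Nat.choose_self, Set.ncard_eq_one]
      simp_rw [and_comm (a := _ = a + 1)]
      exact ⟨_, setOf_count_not_eq_zero true (a + 1)⟩
    | succ b ihb =>
      have hsplit : {bs : List Bool | bs.count true = a + 1 ∧ bs.count false = b + 1} =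
          List.cons true '' {bs | bs.count true = a ∧ bs.count false = b + 1} ∪
          List.cons false '' {bs | bs.count true = a + 1 ∧ bs.count false = b} := by
        ext (_ | ⟨_ | _, bs⟩) <;> simp
      have hdisj : Disjoint (List.cons true '' {bs | bs.count true = a ∧ bs.count false = b + 1})
          (List.cons false '' {bs | bs.count true = a + 1 ∧ bs.count false = b}) :=
        Set.disjoint_left.2 (by rintro _ ⟨_, _, rfl⟩ ⟨_, _, h⟩; simp at h)
      rw [hsplit, Set.ncard_union_eq hdisj ((hfin _ _).image _) ((hfin _ _).image _),
        List.cons_injective.injOn.ncard_image, List.cons_injective.injOn.ncard_image, iha, ihb,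
        show a + 1 + (b + 1) = a + b + 1 + 1 by omega, show a + 1 + b = a + b + 1 by omega,
        Nat.choose_succ_succ']
      rfl

omit [DecidableEq V] in
theorem isMatching_image_map_iff {W : Type*} [DecidableEq W] {f : V → W}
    (hf : Function.Injective f) {s : Finset (Sym2 V)} :
    IsMatching (s.image (Sym2.map f)) ↔ IsMatching s := by
  simp only [IsMatching, forall_mem_image, Sym2.isDiag_map hf, Ne, (Sym2.map.injective hf).eq_iff,
    Sym2.mem_map]
  simp only [forall_exists_index, and_imp, forall_apply_eq_imp_iff₂, not_exists, not_and,
    hf.eq_iff]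
  exact and_congr_right fun _ => forall₂_congr fun p _ => forall₂_congr fun q _ =>
    imp_congr_right fun _ =>
      ⟨fun h x hxp hxq => h x hxp x hxq rfl, fun h x hxp y hyq hyx => h x hxp (hyx ▸ hyq)⟩

theorem isMatching_union_iff {s t : Finset (Sym2 V)} (hst : ∀ p ∈ s, ∀ q ∈ t, ∀ x ∈ p, x ∉ q) :
    IsMatching (s ∪ t) ↔ IsMatching s ∧ IsMatching t := by
  refine ⟨fun h => ⟨h.mono subset_union_left, h.mono subset_union_right⟩,
    fun ⟨hs, ht⟩ => ⟨?_, ?_⟩⟩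
  · simp only [mem_union]
    rintro p (hp | hp)
    exacts [hs.1 p hp, ht.1 p hp]
  · simp only [mem_union]
    rintro p (hp | hp) q (hq | hq) hpq x hxp hxq
    exacts [hs.2 p hp q hq hpq x hxp hxq, hst p hp q hq x hxp hxq, hst q hq p hp x hxq hxp,
      ht.2 p hp q hq hpq x hxp hxq]

section DisjointUnion

variable {V' : Type*}

omit [DecidableEq V] in
theorem Sym2.map_inl_ne_map_inr (p : Sym2 V) (q : Sym2 V') :
    p.map (Sum.inl : V → V ⊕ V') ≠ q.map Sum.inr := by
  induction p using Sym2.ind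
  induction q using Sym2.ind
  simp

def embedAdj : Sym2 V ⊕ Sym2 V' → Sym2 (V ⊕ V') :=
  Sum.elim (Sym2.map Sum.inl) (Sym2.map Sum.inr)

omit [DecidableEq V] in
theorem embedAdj_injective : Function.Injective (embedAdj : Sym2 V ⊕ Sym2 V' → _) :=
  (Sym2.map.injective Sum.inl_injective).sumElim (Sym2.map.injective Sum.inr_injective)
    Sym2.map_inl_ne_map_inr

variable [DecidableEq V']

def sumAdj (s : Finset (Sym2 V)) (s' : Finset (Sym2 V')) : Finset (Sym2 (V ⊕ V')) :=
  s.image (Sym2.map Sum.inl) ∪ s'.image (Sym2.map Sum.inr)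

variable {s t : Finset (Sym2 V)} {s' t' : Finset (Sym2 V')}

@[simp] theorem map_inl_mem_sumAdj {p : Sym2 V} : p.map Sum.inl ∈ sumAdj s s' ↔ p ∈ s := by
  simp [sumAdj, (Sym2.map.injective Sum.inl_injective).eq_iff,
    Ne.symm (Sym2.map_inl_ne_map_inr _ _)]

@[simp] theorem map_inr_mem_sumAdj {p : Sym2 V'} : p.map Sum.inr ∈ sumAdj s s' ↔ p ∈ s' := by
  simp [sumAdj, (Sym2.map.injective Sum.inr_injective).eq_iff, Sym2.map_inl_ne_map_inr]

theorem mem_sumAdj {q : Sym2 (V ⊕ V')} :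
    q ∈ sumAdj s s' ↔ (∃ p ∈ s, p.map Sum.inl = q) ∨ ∃ p ∈ s', p.map Sum.inr = q := by
  simp [sumAdj]

theorem symmDiff_sumAdj :
    symmDiff (sumAdj s s') (sumAdj t t') = sumAdj (symmDiff s t) (symmDiff s' t') := by
  ext q
  by_cases hl : ∃ p : Sym2 V, p.map Sum.inl = q
  · obtain ⟨p, rfl⟩ := hl
    simp [mem_symmDiff]
  by_cases hr : ∃ p : Sym2 V', p.map Sum.inr = q
  · obtain ⟨p, rfl⟩ := hr
    simp [mem_symmDiff]
  have hq {u : Finset (Sym2 V)} {u' : Finset (Sym2 V')} : q ∉ sumAdj u u' := by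
    simp only [mem_sumAdj, not_or]
    exact ⟨fun ⟨p, _, hp⟩ => hl ⟨p, hp⟩, fun ⟨p, _, hp⟩ => hr ⟨p, hp⟩⟩
  simp [mem_symmDiff, hq]

theorem symmDiff_sumAdj_inl {p : Sym2 V} :
    symmDiff (sumAdj s s') {p.map Sum.inl} = sumAdj (symmDiff s {p}) s' := by
  have : {p.map Sum.inl} = sumAdj {p} (∅ : Finset (Sym2 V')) := by simp [sumAdj]
  rw [this, symmDiff_sumAdj, ← bot_eq_empty, symmDiff_bot]

theorem symmDiff_sumAdj_inr {p : Sym2 V'} :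
    symmDiff (sumAdj s s') {p.map Sum.inr} = sumAdj s (symmDiff s' {p}) := by
  have : {p.map Sum.inr} = sumAdj (∅ : Finset (Sym2 V)) {p} := by simp [sumAdj]
  rw [this, symmDiff_sumAdj, ← bot_eq_empty, symmDiff_bot]

theorem sumAdj_inj : sumAdj s s' = sumAdj t t' ↔ s = t ∧ s' = t' := by
  refine ⟨fun h => ⟨?_, ?_⟩, fun ⟨hs, hs'⟩ => hs ▸ hs' ▸ rfl⟩ <;> ext p
  · simpa using congrArg (p.map Sum.inl ∈ ·) h
  · simpa using congrArg (p.map Sum.inr ∈ ·) h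

theorem isMatching_sumAdj : IsMatching (sumAdj s s') ↔ IsMatching s ∧ IsMatching s' := by
  rw [sumAdj, isMatching_union_iff, isMatching_image_map_iff Sum.inl_injective,
    isMatching_image_map_iff Sum.inr_injective]
  simp only [forall_mem_image, Sym2.mem_map]
  rintro p - q - _ ⟨x, -, rfl⟩ ⟨y, -, h⟩
  exact Sum.inr_ne_inl h

theorem IsParsimoniousSeq.sumAdj_shuffle :
    ∀ {bs : List Bool} {s : Finset (Sym2 V)} {l₁ : List (Sym2 V)} {s' : Finset (Sym2 V')}
      {l₂ : List (Sym2 V')}, IsParsimoniousSeq s t l₁ → IsParsimoniousSeq s' t' l₂ →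
      bs.count true = l₁.length → bs.count false = l₂.length →
      IsParsimoniousSeq (sumAdj s s') (sumAdj t t') ((shuffle bs l₁ l₂).map embedAdj)
  | [], _, [], _, [], ⟨hs, rfl⟩, ⟨hs', rfl⟩, _, _ => ⟨isMatching_sumAdj.2 ⟨hs, hs'⟩, rfl⟩
  | true :: bs, s, a :: l₁, s', l₂, ⟨hs, ha, hl₁⟩, hl₂, h₁, h₂ => by
    refine ⟨isMatching_sumAdj.2 ⟨hs, hl₂.isMatching⟩, ?_, ?_⟩
    · simpa [symmDiff_sumAdj, embedAdj] using ha
    · rw [embedAdj, Sum.elim_inl, symmDiff_sumAdj_inl]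
      exact sumAdj_shuffle hl₁ hl₂ (by simpa using h₁) (by simpa using h₂)
  | false :: bs, s, l₁, s', b :: l₂, hl₁, ⟨hs', hb, hl₂⟩, h₁, h₂ => by
    refine ⟨isMatching_sumAdj.2 ⟨hl₁.isMatching, hs'⟩, ?_, ?_⟩
    · simpa [symmDiff_sumAdj, embedAdj] using hb
    · rw [embedAdj, Sum.elim_inr, symmDiff_sumAdj_inr]
      exact sumAdj_shuffle hl₁ hl₂ (by simpa using h₁) (by simpa using h₂)
  | [], _, _ :: _, _, _, _, _, h₁, _ | [], _, _, _, _ :: _, _, _, _, h₂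
  | true :: _, _, [], _, _, _, _, h₁, _ | false :: _, _, _, _, [], _, _, _, h₂ => by simp_all

theorem IsParsimoniousSeq.exists_shuffle_eq :
    ∀ {s : Finset (Sym2 V)} {s' : Finset (Sym2 V')} {m : List (Sym2 (V ⊕ V'))},
      IsParsimoniousSeq (sumAdj s s') (sumAdj t t') m →
      ∃ bs l₁ l₂, bs.count true = l₁.length ∧ bs.count false = l₂.length ∧
        IsParsimoniousSeq s t l₁ ∧ IsParsimoniousSeq s' t' l₂ ∧ (shuffle bs l₁ l₂).map embedAdj = m
  | s, s', [], ⟨hm, heq⟩ => by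
    obtain ⟨rfl, rfl⟩ := sumAdj_inj.1 heq
    obtain ⟨hs, hs'⟩ := isMatching_sumAdj.1 hm
    exact ⟨[], [], [], rfl, rfl, ⟨hs, rfl⟩, ⟨hs', rfl⟩, rfl⟩
  | s, s', q :: m, ⟨hm, hq, hrest⟩ => by
    obtain ⟨hs, hs'⟩ := isMatching_sumAdj.1 hm
    rw [symmDiff_sumAdj, mem_sumAdj] at hq
    obtain ⟨a, ha, rfl⟩ | ⟨b, hb, rfl⟩ := hq
    · rw [symmDiff_sumAdj_inl] at hrest
      obtain ⟨bs, l₁, l₂, h₁, h₂, hl₁, hl₂, rfl⟩ := hrest.exists_shuffle_eq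
      exact ⟨true :: bs, a :: l₁, l₂, by simpa using h₁, by simpa using h₂, ⟨hs, ha, hl₁⟩, hl₂,
        by simp [shuffle, embedAdj]⟩
    · rw [symmDiff_sumAdj_inr] at hrest
      obtain ⟨bs, l₁, l₂, h₁, h₂, hl₁, hl₂, rfl⟩ := hrest.exists_shuffle_eq
      exact ⟨false :: bs, l₁, b :: l₂, by simpa using h₁, by simpa using h₂, hl₁, ⟨hs', hb, hl₂⟩,
        by simp [shuffle, embedAdj]⟩

theorem ncard_setOf_isParsimoniousSeq_sumAdj (s t : Finset (Sym2 V)) (s' t' : Finset (Sym2 V')) :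
    {m | IsParsimoniousSeq (sumAdj s s') (sumAdj t t') m}.ncard =
      (#(symmDiff s t) + #(symmDiff s' t')).choose #(symmDiff s t) *
        {l | IsParsimoniousSeq s t l}.ncard * {l | IsParsimoniousSeq s' t' l}.ncard := by
  set T := {x : List Bool × List (Sym2 V) × List (Sym2 V') |
    x.1.count true = x.2.1.length ∧ x.1.count false = x.2.2.length ∧
      IsParsimoniousSeq s t x.2.1 ∧ IsParsimoniousSeq s' t' x.2.2}
  have himage : {m | IsParsimoniousSeq (sumAdj s s') (sumAdj t t') m} =
      (fun x => (shuffle x.1 x.2.1 x.2.2).map embedAdj) '' T := by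
    refine Set.ext fun m => ⟨fun hm => ?_, ?_⟩
    · obtain ⟨bs, l₁, l₂, h⟩ := IsParsimoniousSeq.exists_shuffle_eq hm
      exact ⟨(bs, l₁, l₂), ⟨h.1, h.2.1, h.2.2.1, h.2.2.2.1⟩, h.2.2.2.2⟩
    · rintro ⟨x, ⟨h₁, h₂, hl₁, hl₂⟩, rfl⟩
      exact hl₁.sumAdj_shuffle hl₂ h₁ h₂
  have hinj : Set.InjOn (fun x => (shuffle x.1 x.2.1 x.2.2).map embedAdj) T :=
    (List.map_injective_iff.2 embedAdj_injective).comp_injOn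
      (shuffle_injOn.mono fun _ hx => Set.mem_ofPred.2 ⟨hx.1, hx.2.1⟩)
  have hprod : T = {bs | bs.count true = #(symmDiff s t) ∧ bs.count false = #(symmDiff s' t')} ×ˢ
      {l | IsParsimoniousSeq s t l} ×ˢ {l | IsParsimoniousSeq s' t' l} := by
    ext ⟨bs, l₁, l₂⟩
    simp only [T, Set.mem_ofPred_eq, Set.mem_prod]
    constructor
    · rintro ⟨h₁, h₂, hl₁, hl₂⟩
      exact ⟨⟨h₁.trans hl₁.length_eq, h₂.trans hl₂.length_eq⟩, hl₁, hl₂⟩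
    · rintro ⟨⟨h₁, h₂⟩, hl₁, hl₂⟩
      exact ⟨h₁.trans hl₁.length_eq.symm, h₂.trans hl₂.length_eq.symm, hl₁, hl₂⟩
  rw [himage, hinj.ncard_image, hprod, Set.ncard_prod, Set.ncard_prod,
    ncard_setOf_count_true_count_false, mul_assoc]

end DisjointUnion

/-- Let `(G1, G2)` be genomes on `V` and `(G1', G2')` genomes on a
disjoint extremity set `V'` (modelled by the sum type `V ⊕ V'`).  If `H1`, `H2` are the
disjoint unions `G1 ⊔ G1'`, `G2 ⊔ G2'` on `V ⊕ V'`, then the number of most parsimonious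
SCJ scenarios from `H1` to `H2` equals `binom (d + d') d · N · N'`, where `d`, `d'` are
the SCJ distances and `N`, `N'` the scenario counts of the two pairs. -/
theorem disjointUnion_count {V V' : Type*} [DecidableEq V] [DecidableEq V']
    (G1 G2 : Genome V) (G1' G2' : Genome V') (H1 H2 : Genome (V ⊕ V'))
    (hH1 : H1.adj = G1.adj.image (Sym2.map Sum.inl) ∪ G1'.adj.image (Sym2.map Sum.inr))
    (hH2 : H2.adj = G2.adj.image (Sym2.map Sum.inl) ∪ G2'.adj.image (Sym2.map Sum.inr)) :
    NumMPS H1 H2 =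
      Nat.choose (dSCJ G1 G2 + dSCJ G1' G2') (dSCJ G1 G2) * NumMPS G1 G2 * NumMPS G1' G2' := by
  rw [numMPS_eq_ncard, numMPS_eq_ncard, numMPS_eq_ncard, dSCJ_eq_card_symmDiff,
    dSCJ_eq_card_symmDiff, hH1, hH2]
  exact ncard_setOf_isParsimoniousSeq_sumAdj G1.adj G2.adj G1'.adj G2'.adj
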